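/- Let x > 1 and A = (1/(x+1)^3)·[[x^3,3x^2,3x,1],[x^2,x^3+2x,2x^2+1,x],[x,2x^2+1,x^3+2x,x^2],[1,3x,3x^2,x^3]]. Then A is invertible, and for any vector (t_0,t_1,t_2,t_3) = (u_0,u_1,u_2,u_3)·A, the linear combination (−t_0 + t_1·x − t_2·x^2 + t_3·x^3)/(x−1)^3 equals u_3. -/

import Mathlib

/-!
The weight vector `w = (-1, x, -x², x³)` is `(x - 1)³` times the last column of `A⁻¹`
(`A` is the third symmetric power of the one-edge flip matrix `[[x, 1], [1, x]] / (x + 1)`),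
so `A *ᵥ w = (x - 1)³ • e₃` and hence `t ⬝ᵥ w = u ⬝ᵥ (A *ᵥ w) = (x - 1)³ u₃`.
Invertibility follows from `det A = ((x - 1) / (x + 1))⁶`.
-/

open Matrix

section
variable {R : Type*} [CommRing R]

def tripletFlipMatrix (x : R) : Matrix (Fin 4) (Fin 4) R :=
  !![x^3,   3*x^2,     3*x,       1;
     x^2,   x^3+2*x,   2*x^2+1,   x;
     x,     2*x^2+1,   x^3+2*x,   x^2;
     1,     3*x,       3*x^2,     x^3]

theorem det_tripletFlipMatrix (x : R) : (tripletFlipMatrix x).det = (x ^ 2 - 1) ^ 6 := by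
  rw [tripletFlipMatrix, det_succ_row_zero]
  simp [Fin.sum_univ_succ, det_fin_three, Fin.succAbove]
  ring

theorem tripletFlipMatrix_mulVec_alternating (x : R) :
    tripletFlipMatrix x *ᵥ ![-1, x, -x ^ 2, x ^ 3] = Pi.single 3 ((x ^ 2 - 1) ^ 3) := by
  ext i
  fin_cases i <;> simp [tripletFlipMatrix, mulVec, dotProduct, Fin.sum_univ_four] <;> ring
end

theorem vecMul_dotProduct_eq_of_mulVec_eq_single {n R : Type*} [Fintype n] [DecidableEq n]
    [CommSemiring R] {A : Matrix n n R} {w : n → R} {i : n} {c : R}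
    (h : A *ᵥ w = Pi.single i c) (u : n → R) : (u ᵥ* A) ⬝ᵥ w = u i * c := by
  rw [← dotProduct_mulVec, h, dotProduct_single]

/-- For `x > 1`, the triplet transition matrix `A` is invertible, and whenever
`(t₀,t₁,t₂,t₃) = (u₀,u₁,u₂,u₃)·A`, the combination
`(-t₀ + t₁x - t₂x² + t₃x³)/(x-1)³` recovers `u₃` (the true triangle count). -/
theorem triangle_count_debias (x : ℝ) (hx : 1 < x)
    (A : Matrix (Fin 4) (Fin 4) ℝ)
    (hA : A = (1 / (x + 1)^3) •
        !![x^3,   3*x^2,     3*x,       1;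
           x^2,   x^3+2*x,   2*x^2+1,   x;
           x,     2*x^2+1,   x^3+2*x,   x^2;
           1,     3*x,       3*x^2,     x^3])
    (u t : Fin 4 → ℝ) (ht : t = u ᵥ* A) :
    IsUnit A ∧
    (-(t 0) + t 1 * x - t 2 * x^2 + t 3 * x^3) / (x - 1)^3 = u 3 := by
  have hx1 : x + 1 ≠ 0 := by positivity
  have hx2 : x - 1 ≠ 0 := (sub_pos.mpr hx).ne'
  replace hA : A = ((x + 1) ^ 3)⁻¹ • tripletFlipMatrix x := by rw [hA, one_div]; rfl
  refine ⟨?_, ?_⟩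
  · rw [isUnit_iff_isUnit_det, hA, det_smul, det_tripletFlipMatrix, isUnit_iff_ne_zero]
    have : x ^ 2 - 1 ≠ 0 := by nlinarith
    positivity
  · have hAw : A *ᵥ ![-1, x, -x ^ 2, x ^ 3] = Pi.single 3 ((x - 1) ^ 3) := by
      rw [hA, smul_mulVec, tripletFlipMatrix_mulVec_alternating, ← Pi.single_smul', smul_eq_mul,
        show (x ^ 2 - 1) ^ 3 = (x + 1) ^ 3 * (x - 1) ^ 3 by ring, inv_mul_cancel_left₀ (pow_ne_zero 3 hx1)]
    have hnum : -(t 0) + t 1 * x - t 2 * x ^ 2 + t 3 * x ^ 3 = t ⬝ᵥ ![-1, x, -x ^ 2, x ^ 3] := by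
      simp only [dotProduct, Fin.sum_univ_four, cons_val]
      ring
    rw [hnum, ht, vecMul_dotProduct_eq_of_mulVec_eq_single hAw,
      mul_div_cancel_right₀ _ (pow_ne_zero 3 hx2)]
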